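/- Let K : ℝ² \ Δ → ℂ be a compact Calderón–Zygmund kernel: there exist bounded functions L, S, D : [0,∞) → [0,∞) with L(x) → 0 as x → ∞, S(x) → 0 as x → 0, D(x) → 0 as x → ∞, constants C > 0 and 0 < δ ≤ 1 such that |K(t,x) − K(t',x')| ≤ C·((|t−t'|+|x−x'|)^δ / |t−x|^{1+δ})·L(|t−x|)·S(|t−x|)·D(|t+x|) whenever 2(|t−t'|+|x−x'|) < |t−x|. Assume further that K(t,x) → 0 as |t−x| → ∞. Then there exist bounded functions L̃, S̃, D̃ with the same limit properties (L̃ → 0 at ∞, S̃ → 0 at 0, D̃ → 0 at ∞) such that |K(t,x)| ≤ (1/|t−x|)·L̃(|t−x|)·S̃(|t−x|)·D̃(|t+x|) for all (t,x) off the diagonal. -/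

import Mathlib

open Filter

/-- A set of admissible functions: bounded, nonnegative, with the limits
`L(x) → 0` as `x → ∞`, `S(x) → 0` as `x → 0`, `D(x) → 0` as `x → ∞`. -/
def Admissible (L S D : ℝ → ℝ) : Prop :=
  (∀ x, 0 ≤ L x) ∧ (∀ x, 0 ≤ S x) ∧ (∀ x, 0 ≤ D x) ∧
  (∃ B : ℝ, ∀ x, L x ≤ B ∧ S x ≤ B ∧ D x ≤ B) ∧
  Tendsto L atTop (nhds 0) ∧
  Tendsto S (nhdsWithin 0 (Set.Ioi 0)) (nhds 0) ∧
  Tendsto D atTop (nhds 0)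

open Topology

/-!
Move `(t, x)` along the dilations about its midpoint: `(tⱼ, xⱼ)` with `tⱼ + xⱼ = t + x` and
`tⱼ - xⱼ = rʲ (t - x)`, where `1 < r < 3/2`. Consecutive points are close enough for the
smoothness estimate, which bounds the `j`-th step by `C r⁻ʲ |t - x|⁻¹ (LS)(rʲ |t - x|) D(|t + x|)`;
`D` is always evaluated at `|t + x|` because the path keeps `t + x` fixed. As `K` vanishes far
from the diagonal, telescoping gives
`|t - x| ‖K t x‖ ≤ C D(|t + x|) F(|t - x|)`, where `F u = ∑ⱼ r⁻ʲ (LS)(rʲ u)`.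
By dominated convergence `F` inherits from `LS` its vanishing at `0` and at `∞`, so one can take
`L̃ = S̃ = √(C F)` and `D̃ = D`.
-/

section GeomAverage

variable {q r B : ℝ} {φ : ℝ → ℝ}

noncomputable def geomAverage (q r : ℝ) (φ : ℝ → ℝ) (u : ℝ) : ℝ :=
  ∑' j : ℕ, q ^ j * φ (r ^ j * u)

theorem summable_geomAverage (hq0 : 0 ≤ q) (hq1 : q < 1) (hφ0 : ∀ v, 0 ≤ φ v)
    (hφB : ∀ v, φ v ≤ B) (u : ℝ) : Summable fun j : ℕ => q ^ j * φ (r ^ j * u) :=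
  ((summable_geometric_of_lt_one hq0 hq1).mul_right B).of_nonneg_of_le
    (fun j => mul_nonneg (pow_nonneg hq0 j) (hφ0 _))
    (fun j => mul_le_mul_of_nonneg_left (hφB _) (pow_nonneg hq0 j))

theorem geomAverage_nonneg (hq0 : 0 ≤ q) (hφ0 : ∀ v, 0 ≤ φ v) (u : ℝ) :
    0 ≤ geomAverage q r φ u :=
  tsum_nonneg fun j => mul_nonneg (pow_nonneg hq0 j) (hφ0 _)

theorem geomAverage_le (hq0 : 0 ≤ q) (hq1 : q < 1) (hφ0 : ∀ v, 0 ≤ φ v)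
    (hφB : ∀ v, φ v ≤ B) (u : ℝ) : geomAverage q r φ u ≤ B / (1 - q) := by
  have hgeom := summable_geometric_of_lt_one hq0 hq1
  calc geomAverage q r φ u ≤ ∑' j : ℕ, q ^ j * B :=
        (summable_geomAverage hq0 hq1 hφ0 hφB u).tsum_le_tsum
          (fun j => mul_le_mul_of_nonneg_left (hφB _) (pow_nonneg hq0 j)) (hgeom.mul_right B)
    _ = B / (1 - q) := by
        rw [hgeom.tsum_mul_right, tsum_geometric_of_lt_one hq0 hq1, inv_mul_eq_div]

theorem sum_range_le_geomAverage (hq0 : 0 ≤ q) (hq1 : q < 1) (hφ0 : ∀ v, 0 ≤ φ v)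
    (hφB : ∀ v, φ v ≤ B) (u : ℝ) (N : ℕ) :
    ∑ j ∈ Finset.range N, q ^ j * φ (r ^ j * u) ≤ geomAverage q r φ u :=
  (summable_geomAverage hq0 hq1 hφ0 hφB u).sum_le_tsum _
    fun j _ => mul_nonneg (pow_nonneg hq0 j) (hφ0 _)

theorem tendsto_geomAverage {l : Filter ℝ} (hq0 : 0 ≤ q) (hq1 : q < 1) (hφ0 : ∀ v, 0 ≤ φ v)
    (hφB : ∀ v, φ v ≤ B) (hl : ∀ j : ℕ, Tendsto (fun u => r ^ j * u) l l)
    (hφ : Tendsto φ l (𝓝 0)) : Tendsto (geomAverage q r φ) l (𝓝 0) := by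
  have hlim := tendsto_tsum_of_dominated_convergence (f := fun u j => q ^ j * φ (r ^ j * u))
    (g := fun _ => 0) ((summable_geometric_of_lt_one hq0 hq1).mul_right B)
    (fun j => by simpa using (hφ.comp (hl j)).const_mul (q ^ j))
    (Eventually.of_forall fun u j => by
      rw [Real.norm_of_nonneg (mul_nonneg (pow_nonneg hq0 j) (hφ0 _))]
      exact mul_le_mul_of_nonneg_left (hφB _) (pow_nonneg hq0 j))
  unfold geomAverage
  simpa using hlim

end GeomAverage

theorem tendsto_const_mul_nhdsGT_zero {c : ℝ} (hc : 0 < c) :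
    Tendsto (fun u => c * u) (𝓝[>] 0) (𝓝[>] 0) :=
  tendsto_nhdsWithin_of_tendsto_nhds_of_eventually_within _
    (by simpa using (tendsto_nhdsWithin_of_tendsto_nhds (tendsto_id (x := 𝓝 (0:ℝ)))).const_mul c)
    (eventually_nhdsWithin_of_forall fun u hu => mul_pos hc hu)

theorem admissible_sqrt_sqrt {F D : ℝ → ℝ} (hFB : ∃ B, ∀ u, F u ≤ B)
    (hFtop : Tendsto F atTop (𝓝 0)) (hFzero : Tendsto F (𝓝[>] 0) (𝓝 0))
    (hD0 : ∀ v, 0 ≤ D v) (hDB : ∃ B, ∀ v, D v ≤ B) (hDtop : Tendsto D atTop (𝓝 0)) :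
    Admissible (fun u => √(F u)) (fun u => √(F u)) D := by
  obtain ⟨B₁, hB₁⟩ := hFB
  obtain ⟨B₂, hB₂⟩ := hDB
  have hsqrt : ∀ u, √(F u) ≤ max √B₁ B₂ := fun u =>
    (Real.sqrt_le_sqrt (hB₁ u)).trans (le_max_left _ _)
  refine ⟨fun u => Real.sqrt_nonneg _, fun u => Real.sqrt_nonneg _, hD0,
    ⟨max √B₁ B₂, fun u => ⟨hsqrt u, hsqrt u, (hB₂ u).trans (le_max_right _ _)⟩⟩,
    by simpa using hFtop.sqrt, by simpa using hFzero.sqrt, hDtop⟩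

theorem rpow_div_rpow_one_add_le_inv {a b δ : ℝ} (ha : 0 ≤ a) (hab : a ≤ b) (hb : 0 < b)
    (hδ : 0 ≤ δ) : a ^ δ / b ^ (1 + δ) ≤ b⁻¹ := by
  rw [Real.rpow_add hb, Real.rpow_one, div_le_iff₀ (by positivity), inv_mul_cancel_left₀ hb.ne']
  exact Real.rpow_le_rpow ha hab hδ

noncomputable def dilate (t x l : ℝ) : ℝ × ℝ :=
  ((t + x + l * (t - x)) / 2, (t + x - l * (t - x)) / 2)

section Dilate

variable (t x : ℝ)

@[simp]
theorem dilate_one : dilate t x 1 = (t, x) := by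
  ext <;> simp only [dilate] <;> ring

theorem dilate_fst_sub_snd (l : ℝ) : (dilate t x l).1 - (dilate t x l).2 = l * (t - x) := by
  simp only [dilate]; ring

theorem dilate_fst_add_snd (l : ℝ) : (dilate t x l).1 + (dilate t x l).2 = t + x := by
  simp only [dilate]; ring

theorem abs_dilate_sub_add_abs_dilate_sub (l m : ℝ) :
    |(dilate t x l).1 - (dilate t x m).1| + |(dilate t x l).2 - (dilate t x m).2|
      = |l - m| * |t - x| := by
  have h₁ : (dilate t x l).1 - (dilate t x m).1 = (l - m) * (t - x) / 2 := by
    simp only [dilate]; ring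
  have h₂ : (dilate t x l).2 - (dilate t x m).2 = -((l - m) * (t - x) / 2) := by
    simp only [dilate]; ring
  rw [h₁, h₂, abs_neg, abs_div, abs_mul, abs_two]
  ring

end Dilate

def CZSmooth (K : ℝ → ℝ → ℂ) (L S D : ℝ → ℝ) (C δ : ℝ) : Prop :=
  ∀ t x t' x' : ℝ, 2 * (|t - t'| + |x - x'|) < |t - x| →
    ‖K t x - K t' x'‖ ≤
      C * ((|t - t'| + |x - x'|) ^ δ / |t - x| ^ (1 + δ)) * (L |t - x| * S |t - x| * D |t + x|)

namespace CZSmooth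

variable {K : ℝ → ℝ → ℂ} {L S D : ℝ → ℝ} {C δ : ℝ}

theorem tendsto_norm_dilate {l : Filter ℕ} {s : ℕ → ℝ}
    (hvanish : ∀ ε > 0, ∃ R : ℝ, ∀ t x : ℝ, R ≤ |t - x| → ‖K t x‖ ≤ ε) {t x : ℝ} (htx : t ≠ x)
    (hs : Tendsto s l atTop) :
    Tendsto (fun n => ‖K (dilate t x (s n)).1 (dilate t x (s n)).2‖) l (𝓝 0) := by
  have hu : 0 < |t - x| := abs_pos.2 (sub_ne_zero.2 htx)
  refine tendsto_order.2 ⟨fun a ha => Eventually.of_forall fun n => ha.trans_le (norm_nonneg _),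
    fun ε hε => ?_⟩
  obtain ⟨R, hR⟩ := hvanish (ε / 2) (half_pos hε)
  filter_upwards [(hs.atTop_mul_const hu).eventually_ge_atTop R, hs.eventually_ge_atTop 0]
    with n hRn hn
  have := hR _ _ (by rwa [dilate_fst_sub_snd, abs_mul, abs_of_nonneg hn])
  linarith

theorem norm_sub_dilate_le (hK : CZSmooth K L S D C δ) (hC : 0 ≤ C) (hδ : 0 ≤ δ)
    (hL0 : ∀ v, 0 ≤ L v) (hS0 : ∀ v, 0 ≤ S v) (hD0 : ∀ v, 0 ≤ D v) {t x l m : ℝ}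
    (htx : t ≠ x) (hl : 0 < l) (hlm : 2 * |l - m| < l) :
    ‖K (dilate t x l).1 (dilate t x l).2 - K (dilate t x m).1 (dilate t x m).2‖
      ≤ C * (l * |t - x|)⁻¹ * (L (l * |t - x|) * S (l * |t - x|) * D |t + x|) := by
  have hu : 0 < |t - x| := abs_pos.2 (sub_ne_zero.2 htx)
  have hdiff := abs_dilate_sub_add_abs_dilate_sub t x l m
  have hgap : |(dilate t x l).1 - (dilate t x l).2| = l * |t - x| := by
    rw [dilate_fst_sub_snd, abs_mul, abs_of_pos hl]
  have hstep := hK _ _ _ _ (by rw [hdiff, hgap]; nlinarith)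
  rw [hdiff, hgap, dilate_fst_add_snd] at hstep
  refine hstep.trans (mul_le_mul_of_nonneg_right (mul_le_mul_of_nonneg_left ?_ hC) ?_)
  · exact rpow_div_rpow_one_add_le_inv (by positivity) (by nlinarith [abs_nonneg (l - m)])
      (by positivity) hδ
  · exact mul_nonneg (mul_nonneg (hL0 _) (hS0 _)) (hD0 _)

theorem mul_norm_le_add_sum (hK : CZSmooth K L S D C δ) (hC : 0 ≤ C) (hδ : 0 ≤ δ)
    (hL0 : ∀ v, 0 ≤ L v) (hS0 : ∀ v, 0 ≤ S v) (hD0 : ∀ v, 0 ≤ D v) {r : ℝ} (hr1 : 1 ≤ r)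
    (hr2 : r < 3 / 2) {t x : ℝ} (htx : t ≠ x) (N : ℕ) :
    |t - x| * ‖K t x‖ ≤ |t - x| * ‖K (dilate t x (r ^ N)).1 (dilate t x (r ^ N)).2‖
      + C * D |t + x| *
        ∑ j ∈ Finset.range N, r⁻¹ ^ j * (L (r ^ j * |t - x|) * S (r ^ j * |t - x|)) := by
  have hu : 0 < |t - x| := abs_pos.2 (sub_ne_zero.2 htx)
  set k : ℕ → ℂ := fun j => K (dilate t x (r ^ j)).1 (dilate t x (r ^ j)).2
  have hstep : ∀ j, |t - x| * dist (k j) (k (j + 1))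
      ≤ C * D |t + x| * (r⁻¹ ^ j * (L (r ^ j * |t - x|) * S (r ^ j * |t - x|))) := by
    intro j
    have hrj : 0 < r ^ j := pow_pos (by linarith) j
    have h := hK.norm_sub_dilate_le hC hδ hL0 hS0 hD0 htx hrj (m := r ^ (j + 1)) (by
      rw [pow_succ, abs_sub_comm, abs_of_nonneg (by nlinarith)]; nlinarith)
    rw [dist_eq_norm]
    calc |t - x| * ‖k j - k (j + 1)‖
        ≤ |t - x| * (C * (r ^ j * |t - x|)⁻¹ * (L (r ^ j * |t - x|) * S (r ^ j * |t - x|)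
            * D |t + x|)) := mul_le_mul_of_nonneg_left h hu.le
      _ = _ := by rw [inv_pow]; field_simp
  have htele : ‖K t x‖ ≤ ‖k N‖ + ∑ j ∈ Finset.range N, dist (k j) (k (j + 1)) := by
    have h := dist_le_range_sum_dist k N
    simp only [k, pow_zero, dilate_one, dist_eq_norm] at h ⊢
    linarith [norm_le_norm_add_norm_sub' (K t x) (k N)]
  calc |t - x| * ‖K t x‖
      ≤ |t - x| * ‖k N‖ + ∑ j ∈ Finset.range N, |t - x| * dist (k j) (k (j + 1)) := by
        rw [← Finset.mul_sum, ← mul_add]; exact mul_le_mul_of_nonneg_left htele hu.le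
    _ ≤ _ := by
        rw [Finset.mul_sum]; exact add_le_add_right (Finset.sum_le_sum fun j _ => hstep j) _

theorem mul_norm_le_geomAverage (hK : CZSmooth K L S D C δ) (hC : 0 ≤ C) (hδ : 0 ≤ δ)
    (hL0 : ∀ v, 0 ≤ L v) (hS0 : ∀ v, 0 ≤ S v) (hD0 : ∀ v, 0 ≤ D v) {B : ℝ}
    (hLS : ∀ v, L v * S v ≤ B) (hvanish : ∀ ε > 0, ∃ R : ℝ, ∀ t x : ℝ, R ≤ |t - x| → ‖K t x‖ ≤ ε)
    {r : ℝ} (hr1 : 1 < r) (hr2 : r < 3 / 2) {t x : ℝ} (htx : t ≠ x) :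
    |t - x| * ‖K t x‖ ≤ C * D |t + x| * geomAverage r⁻¹ r (fun v => L v * S v) |t - x| := by
  have hboundary := ((tendsto_norm_dilate hvanish htx
    (tendsto_pow_atTop_atTop_of_one_lt hr1)).const_mul |t - x|).add_const
      (C * D |t + x| * geomAverage r⁻¹ r (fun v => L v * S v) |t - x|)
  rw [mul_zero, zero_add] at hboundary
  refine ge_of_tendsto' hboundary fun N => (hK.mul_norm_le_add_sum hC hδ hL0 hS0 hD0 hr1.le hr2
    htx N).trans (add_le_add_right (mul_le_mul_of_nonneg_left ?_
      (mul_nonneg hC (hD0 _))) _)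
  exact sum_range_le_geomAverage (by positivity) (inv_lt_one_of_one_lt₀ hr1)
    (fun v => mul_nonneg (hL0 v) (hS0 v)) hLS _ N

end CZSmooth

theorem Admissible.exists_mul_le {L S D : ℝ → ℝ} (h : Admissible L S D) :
    ∃ B, ∀ v, L v * S v ≤ B := by
  obtain ⟨hL0, hS0, -, ⟨B, hB⟩, -⟩ := h
  exact ⟨B * B, fun v => mul_le_mul (hB v).1 (hB v).2.1 (hS0 v) ((hL0 0).trans (hB 0).1)⟩

theorem Admissible.sqrt_geomAverage {L S D : ℝ → ℝ} (hLSD : Admissible L S D) {C r : ℝ}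
    (hC : 0 ≤ C) (hr : 1 < r) :
    Admissible (fun u => √(C * geomAverage r⁻¹ r (fun v => L v * S v) u))
      (fun u => √(C * geomAverage r⁻¹ r (fun v => L v * S v) u)) D := by
  obtain ⟨B', hLSB⟩ := hLSD.exists_mul_le
  obtain ⟨hL0, hS0, hD0, ⟨B, hB⟩, hL, hS, hD⟩ := hLSD
  have hLS0 : ∀ v, 0 ≤ L v * S v := fun v => mul_nonneg (hL0 v) (hS0 v)
  have hq0 : 0 ≤ r⁻¹ := inv_nonneg.2 (by linarith)
  have hq1 : r⁻¹ < 1 := inv_lt_one_of_one_lt₀ hr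
  have hF : ∀ l : Filter ℝ, (∀ j : ℕ, Tendsto (fun u => r ^ j * u) l l) →
      Tendsto (fun v => L v * S v) l (𝓝 0) →
      Tendsto (fun u => C * geomAverage r⁻¹ r (fun v => L v * S v) u) l (𝓝 0) := fun l hl hLS => by
    simpa only [mul_zero] using (tendsto_geomAverage hq0 hq1 hLS0 hLSB hl hLS).const_mul C
  exact admissible_sqrt_sqrt
    ⟨C * (B' / (1 - r⁻¹)), fun u =>
      mul_le_mul_of_nonneg_left (geomAverage_le hq0 hq1 hLS0 hLSB u) hC⟩
    (hF _ (fun j => tendsto_id.const_mul_atTop (pow_pos (by linarith) j))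
      (squeeze_zero hLS0 (fun v => mul_le_mul_of_nonneg_left (hB v).2.1 (hL0 v))
        (by simpa using hL.mul_const B)))
    (hF _ (fun j => tendsto_const_mul_nhdsGT_zero (pow_pos (by linarith) j))
      (squeeze_zero hLS0 (fun v => mul_le_mul_of_nonneg_right (hB v).1 (hS0 v))
        (by simpa using hS.const_mul B)))
    hD0 ⟨B, fun v => (hB v).2.2⟩ hD

theorem statement0 (K : ℝ → ℝ → ℂ) (L S D : ℝ → ℝ) (hLSD : Admissible L S D)
    (C δ : ℝ) (hC : 0 < C) (hδ0 : 0 < δ)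
    (hsmooth : ∀ t x t' x' : ℝ, 2 * (|t - t'| + |x - x'|) < |t - x| →
      ‖K t x - K t' x'‖ ≤
        C * ((|t - t'| + |x - x'|) ^ δ / |t - x| ^ (1 + δ)) *
          (L |t - x| * S |t - x| * D |t + x|))
    (hvanish : ∀ ε > 0, ∃ R : ℝ, ∀ t x : ℝ, R ≤ |t - x| → ‖K t x‖ ≤ ε) :
    ∃ L' S' D' : ℝ → ℝ, Admissible L' S' D' ∧
      ∀ t x : ℝ, t ≠ x →
        ‖K t x‖ ≤ (1 / |t - x|) * (L' |t - x| * S' |t - x| * D' |t + x|) := by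
  have hr : (1 : ℝ) < 4 / 3 := by norm_num
  refine ⟨_, _, D, hLSD.sqrt_geomAverage hC.le hr, fun t x htx => ?_⟩
  obtain ⟨B, hLSB⟩ := hLSD.exists_mul_le
  obtain ⟨hL0, hS0, hD0, -⟩ := hLSD
  have key := CZSmooth.mul_norm_le_geomAverage hsmooth hC.le hδ0.le hL0 hS0 hD0 hLSB hvanish
    hr (by norm_num) htx
  have hF0 := mul_nonneg hC.le
    (geomAverage_nonneg (q := (4 / 3)⁻¹) (r := 4 / 3) (by norm_num)
      (fun v => mul_nonneg (hL0 v) (hS0 v)) |t - x|)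
  rw [Real.mul_self_sqrt hF0, one_div, ← div_eq_inv_mul,
    le_div_iff₀ (abs_pos.2 (sub_ne_zero.2 htx))]
  linarith
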